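/- arXiv:2509.06408 — 3 statements merged into one kernel-verified Lean document; each statement's English description precedes it below -/
import Mathlib

section
/- For n ≥ 30 and 6·log n / n ≤ p ≤ 1/2, there exists a constant C > 0 depending only on the support S_ξ of ξ such that, with probability at least 1 − exp(−2.7·pn), every pair of columns of M satisfies ‖C_i(M) − C_j(M)‖₁ ≤ C·pn for all i, j ∈ [n], where ‖·‖₁ is the sum of the absolute values of the coordinates. -/
/-!
Put `Y k j = |M k j - b|`. It lies in `[0, 1]` and vanishes unless `δ = 1`, so
`E exp (Y k j) ≤ 1 + p (e - 1) ≤ exp (p (e - 1))`. The Chernoff bound with `t = 1` gives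
`P (∑ k, Y k j ≥ 5pn) ≤ exp ((e - 6) pn)` for each column `j`, and the union bound over the `n`
columns costs a factor `n ≤ exp (pn / 6)`. Off these events, the triangle inequality through the
constant vector `b` gives `‖C_i - C_j‖₁ < 10 pn`, so `C = 10` works.
-/

open MeasureTheory ProbabilityTheory

/-- The law of `η = δ·ξ + b`. -/
noncomputable def etaLaw (L : ℕ) (a pv : Fin L → ℝ) (p b : ℝ) : Measure ℝ :=
  ENNReal.ofReal (1 - p) • Measure.dirac b +
    ENNReal.ofReal p • ∑ i, ENNReal.ofReal (pv i) • Measure.dirac (a i + b)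

open Real Finset

section EtaLaw

variable {L : ℕ} {a pv : Fin L → ℝ} {p b : ℝ}

lemma integrable_etaLaw (f : ℝ → ℝ) : Integrable f (etaLaw L a pv p b) := by
  have hdirac (x : ℝ) : Integrable f (Measure.dirac x) := integrable_dirac (by simp)
  refine (integrable_add_measure.2 ⟨(hdirac b).smul_measure ENNReal.ofReal_ne_top, ?_⟩)
  exact (integrable_finsetSum_measure.2 fun i _ =>
    (hdirac _).smul_measure ENNReal.ofReal_ne_top).smul_measure ENNReal.ofReal_ne_top

lemma integral_etaLaw (hp0 : 0 ≤ p) (hp1 : p ≤ 1) (hpv : ∀ i, 0 ≤ pv i) (f : ℝ → ℝ) :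
    ∫ x, f x ∂etaLaw L a pv p b = (1 - p) * f b + p * ∑ i, pv i * f (a i + b) := by
  have hdirac (x : ℝ) : Integrable f (Measure.dirac x) := integrable_dirac (by simp)
  have hterm (i : Fin L) : Integrable f (ENNReal.ofReal (pv i) • Measure.dirac (a i + b)) :=
    (hdirac _).smul_measure ENNReal.ofReal_ne_top
  rw [etaLaw, integral_add_measure ((hdirac b).smul_measure ENNReal.ofReal_ne_top)
      ((integrable_finsetSum_measure.2 fun i _ => hterm i).smul_measure ENNReal.ofReal_ne_top),
    integral_smul_measure, integral_smul_measure,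
    integral_finsetSum_measure fun i _ => hterm i]
  simp [integral_smul_measure, integral_dirac, ENNReal.toReal_ofReal hp0,
    ENNReal.toReal_ofReal (sub_nonneg.2 hp1), ENNReal.toReal_ofReal (hpv _)]

lemma integral_exp_abs_sub_etaLaw_le (ha1 : ∀ i, |a i| ≤ 1) (hpv : ∀ i, 0 ≤ pv i)
    (hpv1 : ∑ i, pv i = 1) (hp0 : 0 ≤ p) (hp1 : p ≤ 1) :
    ∫ x, exp |x - b| ∂etaLaw L a pv p b ≤ exp (p * (exp 1 - 1)) := by
  have hsum : ∑ i, pv i * exp |a i + b - b| ≤ exp 1 :=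
    calc ∑ i, pv i * exp |a i + b - b| ≤ ∑ i, pv i * exp 1 :=
          sum_le_sum fun i _ =>
            mul_le_mul_of_nonneg_left (exp_le_exp.2 (by simpa using ha1 i)) (hpv i)
      _ = exp 1 := by rw [← sum_mul, hpv1, one_mul]
  calc ∫ x, exp |x - b| ∂etaLaw L a pv p b
      = (1 - p) + p * ∑ i, pv i * exp |a i + b - b| := by
        rw [integral_etaLaw hp0 hp1 hpv]; simp
    _ ≤ p * (exp 1 - 1) + 1 := by nlinarith
    _ ≤ exp (p * (exp 1 - 1)) := add_one_le_exp _

end EtaLaw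

section Concentration

variable {Ω ι : Type*} [MeasurableSpace Ω] {μ : Measure Ω}

lemma measureReal_sum_ge_le_of_iIndepFun [Fintype ι] {Y : ι → Ω → ℝ} (hind : iIndepFun Y μ)
    (hmeas : ∀ i, Measurable (Y i)) {t m : ℝ} (ht : 0 ≤ t)
    (hint : ∀ i, Integrable (fun ω => exp (t * Y i ω)) μ) (hmgf : ∀ i, mgf (Y i) μ t ≤ m)
    (ε : ℝ) :
    μ.real {ω | ε ≤ ∑ i, Y i ω} ≤ exp (-t * ε) * m ^ Fintype.card ι := by
  have := hind.isProbabilityMeasure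
  have hmgf_sum : mgf (∑ i, Y i) μ t ≤ m ^ Fintype.card ι := by
    rw [hind.mgf_sum hmeas, ← card_univ, ← prod_const]
    exact prod_le_prod (fun i _ => mgf_nonneg) fun i _ => hmgf i
  calc μ.real {ω | ε ≤ ∑ i, Y i ω}
      ≤ exp (-t * ε) * mgf (∑ i, Y i) μ t := by
        simpa only [Finset.sum_apply] using measure_ge_le_exp_mul_mgf ε ht
          (hind.integrable_exp_mul_sum hmeas (s := univ) fun i _ => hint i)
    _ ≤ exp (-t * ε) * m ^ Fintype.card ι := by gcongr

lemma one_sub_sum_measureReal_le [IsProbabilityMeasure μ] [Fintype ι] {B : ι → Set Ω}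
    {T : Set Ω} (hT : ∀ ω, (∀ i, ω ∉ B i) → ω ∈ T) :
    1 - ∑ i, μ.real (B i) ≤ μ.real T := by
  have hcover : Set.univ ⊆ T ∪ ⋃ i, B i := fun ω _ => by
    by_cases h : ∀ i, ω ∉ B i
    · exact Or.inl (hT ω h)
    · push Not at h
      exact Or.inr (Set.mem_iUnion.2 h)
  have := (measureReal_mono hcover (measure_ne_top μ _)).trans (measureReal_union_le _ _)
  rw [probReal_univ] at this
  linarith [measureReal_iUnion_fintype_le (μ := μ) B]

end Concentration

section Entries

variable {Ω : Type*} [MeasurableSpace Ω] {μ : Measure Ω}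
  {L : ℕ} {a pv : Fin L → ℝ} {p b : ℝ} {X : Ω → ℝ}

lemma integrable_exp_abs_sub_of_map_eq_etaLaw (hX : Measurable X)
    (hlaw : μ.map X = etaLaw L a pv p b) :
    Integrable (fun ω => exp (1 * |X ω - b|)) μ := by
  have hg : Measurable fun x : ℝ => exp (1 * |x - b|) := by fun_prop
  exact (integrable_map_measure hg.aestronglyMeasurable hX.aemeasurable).1
    (hlaw ▸ integrable_etaLaw _)

lemma mgf_abs_sub_le_of_map_eq_etaLaw (hX : Measurable X) (hlaw : μ.map X = etaLaw L a pv p b)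
    (ha1 : ∀ i, |a i| ≤ 1) (hpv : ∀ i, 0 ≤ pv i) (hpv1 : ∑ i, pv i = 1) (hp0 : 0 ≤ p)
    (hp1 : p ≤ 1) :
    mgf (fun ω => |X ω - b|) μ 1 ≤ exp (p * (exp 1 - 1)) := by
  have hg : Measurable fun x : ℝ => exp (1 * |x - b|) := by fun_prop
  rw [mgf, ← integral_map hX.aemeasurable hg.aestronglyMeasurable, hlaw]
  simpa using integral_exp_abs_sub_etaLaw_le ha1 hpv hpv1 hp0 hp1

end Entries

lemma measureReal_column_sum_abs_sub_ge_le {Ω : Type*} [MeasurableSpace Ω] {μ : Measure Ω}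
    {L : ℕ} {a pv : Fin L → ℝ} {p b : ℝ} {n : ℕ} {M : Ω → Matrix (Fin n) (Fin n) ℝ}
    (hMmeas : ∀ i j, Measurable fun ω => M ω i j)
    (hMindep : iIndepFun (fun ij : Fin n × Fin n => fun ω => M ω ij.1 ij.2) μ)
    (hMlaw : ∀ i j, μ.map (fun ω => M ω i j) = etaLaw L a pv p b)
    (ha1 : ∀ i, |a i| ≤ 1) (hpv : ∀ i, 0 ≤ pv i) (hpv1 : ∑ i, pv i = 1) (hp0 : 0 ≤ p)
    (hp1 : p ≤ 1) (j : Fin n) (ε : ℝ) :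
    μ.real {ω | ε ≤ ∑ k, |M ω k j - b|} ≤ exp (-ε) * exp (p * (exp 1 - 1)) ^ n := by
  have hcol : iIndepFun (fun k : Fin n => fun ω => |M ω k j - b|) μ :=
    (hMindep.precomp (g := fun k => (k, j)) fun _ _ h => congrArg Prod.fst h).comp
      (fun _ x => |x - b|) fun _ => by fun_prop
  simpa using measureReal_sum_ge_le_of_iIndepFun hcol (fun k => by fun_prop) zero_le_one
    (fun k => integrable_exp_abs_sub_of_map_eq_etaLaw (hMmeas k j) (hMlaw k j))
    (fun k => mgf_abs_sub_le_of_map_eq_etaLaw (hMmeas k j) (hMlaw k j) ha1 hpv hpv1 hp0 hp1) ε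

lemma sum_abs_sub_le_sum_abs_sub_add_sum_abs_sub {ι : Type*} (s : Finset ι) (x y : ι → ℝ)
    (c : ℝ) : ∑ k ∈ s, |x k - y k| ≤ ∑ k ∈ s, |x k - c| + ∑ k ∈ s, |y k - c| := by
  rw [← sum_add_distrib]
  exact sum_le_sum fun k _ => abs_sub_comm (y k) c ▸ abs_sub_le (x k) c (y k)

lemma natCast_mul_exp_le_of_log_le {n : ℕ} {p : ℝ} (hn : 0 < n) (hlog : 6 * log n / n ≤ p) :
    n * (exp (-(5 * (p * n))) * exp (p * (exp 1 - 1)) ^ n) ≤ exp (-2.7 * (p * n)) := by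
  have hn' : (0 : ℝ) < n := Nat.cast_pos.2 hn
  have hlog' : log n ≤ p * n / 6 := by
    rw [div_le_iff₀ hn'] at hlog; linarith
  have he := exp_one_lt_three
  have hp : 0 ≤ p * n := by linarith [log_natCast_nonneg n]
  calc (n : ℝ) * (exp (-(5 * (p * n))) * exp (p * (exp 1 - 1)) ^ n)
      = exp (log n + (-(5 * (p * n)) + n * (p * (exp 1 - 1)))) := by
        rw [exp_add, exp_log hn', exp_add, exp_nat_mul]
    _ ≤ exp (-2.7 * (p * n)) := exp_le_exp.2 (by nlinarith)

/-- with probability at least `1 - exp(-2.7 pn)`, all pairs of columns of `M`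
are at `ℓ¹`-distance at most `C·pn`, with `C` depending only on the support of `ξ`. -/
theorem column_difference_l1_bound
    (L : ℕ) (a : Fin L → ℝ) (ha1 : ∀ i, |a i| ≤ 1) :
    ∃ C : ℝ, 0 < C ∧
      ∀ (pv : Fin L → ℝ), (∀ i, 0 < pv i) → (∑ i, pv i = 1) →
      ∀ (b : ℝ) (n : ℕ), 30 ≤ n → ∀ p : ℝ,
        6 * Real.log n / n ≤ p → p ≤ 1 / 2 →
        ∀ (Ω : Type) [MeasurableSpace Ω] (μ : Measure Ω) [IsProbabilityMeasure μ]
          (M : Ω → Matrix (Fin n) (Fin n) ℝ),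
          (∀ i j, Measurable fun ω => M ω i j) →
          iIndepFun
            (fun ij : Fin n × Fin n => fun ω => M ω ij.1 ij.2) μ →
          (∀ i j, Measure.map (fun ω => M ω i j) μ = etaLaw L a pv p b) →
          1 - Real.exp (-2.7 * (p * n)) ≤
            (μ {ω | ∀ i j : Fin n, ∑ k : Fin n, |M ω k i - M ω k j| ≤ C * (p * n)}).toReal := by
  refine ⟨10, by norm_num, ?_⟩
  intro pv hpv hpv1 b n hn p hplb hpub Ω _ μ _ M hMmeas hMindep hMlaw
  have hp0 : 0 ≤ p := by
    have : 0 ≤ 6 * log n / n := by positivity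
    linarith
  have hbad := fun j => measureReal_column_sum_abs_sub_ge_le hMmeas hMindep hMlaw ha1
    (fun i => (hpv i).le) hpv1 hp0 (by linarith) j (5 * (p * n))
  have hunion := natCast_mul_exp_le_of_log_le (by omega) hplb
  calc 1 - exp (-2.7 * (p * n))
      ≤ 1 - ∑ j, μ.real {ω | 5 * (p * n) ≤ ∑ k, |M ω k j - b|} := by
        have := sum_le_sum fun j (_ : j ∈ univ) => hbad j
        rw [sum_const, card_univ, Fintype.card_fin, nsmul_eq_mul] at this
        linarith
    _ ≤ μ.real {ω | ∀ i j : Fin n, ∑ k : Fin n, |M ω k i - M ω k j| ≤ 10 * (p * n)} :=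
        one_sub_sum_measureReal_le fun ω hω i j => by
          have hi := hω i
          have hj := hω j
          simp only [Set.mem_ofPred_eq, not_le] at hi hj
          linarith [sum_abs_sub_le_sum_abs_sub_add_sum_abs_sub univ (M ω · i) (M ω · j) b]
end

section
/- Let ζ be a real random variable with E[ζ⁴] < ∞ and E[ζ²] > 0. Then there exists a constant C_ζ > 0 depending only on the law of ζ such that the following holds. Let ε ∈ (0,1), s > 0, let k be a positive integer, and let h₁ < h₂ be reals with h := h₂ − h₁ > 0. If X is a random variable uniformly distributed on the finite set (1/k)ℤ ∩ [h₁, h₂] (independent of ζ), then P_X( E_ζ[dist(ζ s X, ℤ)] ≤ ε ) ≤ C_ζ · max{ 1/(kh), ε/(sh), ε, s/k }. -/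
open MeasureTheory ProbabilityTheory

/-- Distance from a real number to the nearest integer. -/
noncomputable def distZ (t : ℝ) : ℝ := |t - (round t : ℤ)|

/-!
Write `Y = ζ s / k` and `F z = E_ζ[dist(Y z, ℤ)]` for lattice indices `z`, so that the event is
`F z ≤ ε`. As `dist(·, ℤ)` is the norm of `ℝ/ℤ`, `F` is subadditive: translating the `ε`-good
indices by the least of them gives as many `2ε`-good indices in `[0, k h]`. Fix `0 < c ≤ M` with
`p = P(c ≤ |ζ| ≤ M) > 0`. By Markov, each `2ε`-good `d` has, with probability at least `p / 2`,
both `c ≤ |ζ| ≤ M` and `dist(Y d, ℤ) ≤ δ := 4ε / p`. For fixed `ω` with `|Y ω| = β`, the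
`d ∈ [0, k h]` with `dist(β d, ℤ) ≤ δ` lie within `δ / β` of one of about `β k h` points `n / β`,
so there are at most `(β k h + 2)(2δ / β + 1)` of them. Double counting bounds the number of good
indices, and there are at least `k h / 2` lattice points.
-/

open Finset

lemma distZ_eq_norm (t : ℝ) : distZ t = ‖(t : UnitAddCircle)‖ :=
  UnitAddCircle.norm_eq.symm

lemma distZ_nonneg (t : ℝ) : 0 ≤ distZ t := abs_nonneg _

lemma distZ_le_half (t : ℝ) : distZ t ≤ 1 / 2 := abs_sub_round t

lemma distZ_sub_le (a b : ℝ) : distZ (a - b) ≤ distZ a + distZ b := by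
  simpa only [distZ_eq_norm, AddCircle.coe_sub] using norm_sub_le _ _

lemma distZ_abs (t : ℝ) : distZ |t| = distZ t := by
  rcases abs_choice t with h | h <;> simp only [h, distZ_eq_norm, AddCircle.coe_neg, norm_neg]

lemma continuous_distZ : Continuous distZ := by
  simp only [funext distZ_eq_norm]
  exact continuous_norm.comp (AddCircle.continuous_mk' 1)

lemma card_Icc_ceil_floor_le {a b : ℝ} (hab : a ≤ b + 1) :
    (#(Icc ⌈a⌉ ⌊b⌋) : ℝ) ≤ b - a + 1 := by
  rw [Int.card_Icc, ← Int.cast_natCast, Int.toNat_eq_max]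
  push_cast
  exact max_le (by linarith [Int.floor_le b, Int.le_ceil a]) (by linarith)

lemma sub_sub_one_le_card_Icc_ceil_floor (a b : ℝ) :
    b - a - 1 ≤ (#(Icc ⌈a⌉ ⌊b⌋) : ℝ) := by
  rw [Int.card_Icc, ← Int.cast_natCast, Int.toNat_eq_max]
  push_cast
  exact le_max_of_le_left (by linarith [Int.lt_floor_add_one b, Int.ceil_lt_add_one a])

lemma card_filter_distZ_mul_le {β δ : ℝ} (hβ : 0 < β) (hδ : 0 ≤ δ) {D : ℤ} (hD : 0 ≤ D) :
    (#{d ∈ Icc 0 D | distZ (β * ((d : ℤ) : ℝ)) ≤ δ} : ℝ) ≤ (β * D + 2) * (2 * δ / β + 1) := by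
  have hβD : 0 ≤ β * D := mul_nonneg hβ.le (by exact_mod_cast hD)
  -- each such `d` lies within `δ / β` of `n / β`, where `n` is the integer nearest to `β * d`
  have hcover : {d ∈ Icc 0 D | distZ (β * ((d : ℤ) : ℝ)) ≤ δ} ⊆
      (Icc ⌈(-1 / 2 : ℝ)⌉ ⌊β * D + 1 / 2⌋).biUnion
        fun n : ℤ => Icc ⌈(n - δ) / β⌉ ⌊(n + δ) / β⌋ := by
    intro d hd
    obtain ⟨hdD, hdδ⟩ := mem_filter.mp hd
    obtain ⟨hd0, hdD⟩ := mem_Icc.mp hdD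
    have hround := abs_le.mp (abs_sub_round (β * d))
    have hnear := abs_le.mp hdδ
    have : β * d ≤ β * D := by gcongr
    have : 0 ≤ β * d := mul_nonneg hβ.le (by exact_mod_cast hd0)
    refine mem_biUnion.mpr ⟨round (β * d), mem_Icc.mpr ⟨?_, ?_⟩, mem_Icc.mpr ⟨?_, ?_⟩⟩
    · exact Int.ceil_le.mpr (by linarith)
    · exact Int.le_floor.mpr (by linarith)
    · exact Int.ceil_le.mpr ((div_le_iff₀ hβ).mpr (by linarith))
    · exact Int.le_floor.mpr ((le_div_iff₀ hβ).mpr (by linarith))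
  have hfiber (n : ℤ) : (#(Icc ⌈(n - δ) / β⌉ ⌊(n + δ) / β⌋) : ℝ) ≤ 2 * δ / β + 1 := by
    have : (n + δ) / β - (n - δ) / β = 2 * δ / β := by ring
    refine (card_Icc_ceil_floor_le ?_).trans_eq (by linarith)
    have : 0 ≤ 2 * δ / β := by positivity
    linarith
  calc (#{d ∈ Icc 0 D | distZ (β * ((d : ℤ) : ℝ)) ≤ δ} : ℝ)
      ≤ ∑ n ∈ Icc ⌈(-1 / 2 : ℝ)⌉ ⌊β * D + 1 / 2⌋, (#(Icc ⌈(n - δ) / β⌉ ⌊(n + δ) / β⌋) : ℝ) := by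
        exact_mod_cast (card_le_card hcover).trans card_biUnion_le
    _ ≤ #(Icc ⌈(-1 / 2 : ℝ)⌉ ⌊β * D + 1 / 2⌋) * (2 * δ / β + 1) := by
        rw [← nsmul_eq_mul, ← sum_const]
        exact sum_le_sum fun n _ => hfiber n
    _ ≤ (β * D + 2) * (2 * δ / β + 1) := by
        gcongr
        exact (card_Icc_ceil_floor_le (by linarith)).trans_eq (by ring)

lemma card_filter_le_card_filter_sub {F : ℤ → ℝ} (hF : ∀ a b, F (a - b) ≤ F a + F b)
    (lo hi : ℤ) (ε : ℝ) :
    #{j ∈ Icc lo hi | F j ≤ ε} ≤ #{d ∈ Icc 0 (hi - lo) | F d ≤ 2 * ε} := by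
  rcases eq_empty_or_nonempty {j ∈ Icc lo hi | F j ≤ ε} with hempty | hne
  · simp [hempty]
  set j₀ := min' _ hne
  obtain ⟨hj₀, hFj₀⟩ := mem_filter.mp (min'_mem _ hne)
  refine card_le_card_of_injOn (· - j₀) (fun j hj => ?_) (fun a _ b _ h => sub_left_inj.mp h)
  have : j₀ ≤ j := min'_le _ _ hj
  obtain ⟨hj, hFj⟩ := mem_filter.mp hj
  simp only [coe_filter, Set.mem_ofPred_eq, mem_Icc] at hj₀ hj ⊢
  exact ⟨by omega, by linarith [hF j j₀]⟩

section

variable {Ω : Type*} [MeasurableSpace Ω] {μ : Measure Ω}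

lemma mul_card_le_of_card_filter_mem_le [IsProbabilityMeasure μ] {ι : Type*} (I : Finset ι)
    {E : ι → Set Ω} [∀ ω, DecidablePred fun i => ω ∈ E i] (hE : ∀ i, MeasurableSet (E i))
    {q K : ℝ} (hq : ∀ i ∈ I, q ≤ μ.real (E i))
    (hK : ∀ ω, (#{i ∈ I | ω ∈ E i} : ℝ) ≤ K) :
    q * #I ≤ K := by
  have hcount (ω : Ω) : ∑ i ∈ I, (E i).indicator 1 ω = (#{i ∈ I | ω ∈ E i} : ℝ) := by
    simp [Set.indicator_apply]
  have hint (i : ι) : Integrable ((E i).indicator (1 : Ω → ℝ)) μ :=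
    (integrable_const 1).indicator (hE i)
  calc q * #I = ∑ _i ∈ I, q := by rw [sum_const, nsmul_eq_mul, mul_comm]
    _ ≤ ∑ i ∈ I, μ.real (E i) := sum_le_sum hq
    _ = ∫ ω, ∑ i ∈ I, (E i).indicator 1 ω ∂μ := by
        rw [integral_finsetSum I fun i _ => hint i]
        simp only [integral_indicator_one (hE _)]
    _ ≤ ∫ _ω, K ∂μ := by
        refine integral_mono (integrable_finsetSum I fun i _ => hint i) (integrable_const K) ?_
        intro ω
        simpa only [hcount] using hK ω
    _ = K := by simp

lemma measureReal_sub_div_le_measureReal_inter [IsFiniteMeasure μ] {g : Ω → ℝ} (hg : 0 ≤ g)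
    (hgi : Integrable g μ) {δ : ℝ} (hδ : 0 < δ) (A : Set Ω) :
    μ.real A - (∫ ω, g ω ∂μ) / δ ≤ μ.real (A ∩ {ω | g ω ≤ δ}) := by
  have hMarkov := mul_meas_ge_le_integral_of_nonneg (ae_of_all μ hg) hgi δ
  have hsplit : μ.real A ≤ μ.real (A ∩ {ω | g ω ≤ δ}) + μ.real {ω | δ ≤ g ω} := by
    refine (measureReal_mono fun ω hω => ?_).trans (measureReal_union_le _ _)
    rcases le_total (g ω) δ with h | h
    exacts [Or.inl ⟨hω, h⟩, Or.inr h]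
  have : μ.real {ω | δ ≤ g ω} ≤ (∫ ω, g ω ∂μ) / δ := (le_div_iff₀' hδ).mpr hMarkov
  linarith

lemma integrable_distZ_comp [IsFiniteMeasure μ] {X : Ω → ℝ} (hX : Measurable X) :
    Integrable (fun ω => distZ (X ω)) μ := by
  refine .of_bound (continuous_distZ.measurable.comp hX).aestronglyMeasurable (1 / 2)
    (ae_of_all μ fun ω => ?_)
  rw [Real.norm_of_nonneg (distZ_nonneg _)]
  exact distZ_le_half _

lemma integral_distZ_mul_sub_le [IsFiniteMeasure μ] {Y : Ω → ℝ} (hY : Measurable Y) (a b : ℝ) :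
    ∫ ω, distZ (Y ω * (a - b)) ∂μ ≤ ∫ ω, distZ (Y ω * a) ∂μ + ∫ ω, distZ (Y ω * b) ∂μ := by
  have hint (x : ℝ) := integrable_distZ_comp (μ := μ) (hY.mul_const x)
  rw [← integral_add (hint a) (hint b)]
  refine integral_mono (hint _) ((hint a).add (hint b)) fun ω => ?_
  simpa only [mul_sub] using distZ_sub_le (Y ω * a) (Y ω * b)

lemma exists_measure_abs_mem_Icc_ne_zero {ζ : Ω → ℝ} (hζ : ¬ζ =ᵐ[μ] 0) :
    ∃ c M : ℝ, 0 < c ∧ c ≤ M ∧ μ {ω | |ζ ω| ∈ Set.Icc c M} ≠ 0 := by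
  suffices ∃ c M : ℝ, 0 < c ∧ μ {ω | |ζ ω| ∈ Set.Icc c M} ≠ 0 by
    obtain ⟨c, M, hc, hA⟩ := this
    obtain ⟨ω, hcω, hωM⟩ := nonempty_of_measure_ne_zero hA
    exact ⟨c, M, hc, hcω.trans hωM, hA⟩
  by_contra! hnull
  refine hζ (ae_iff.mpr (measure_mono_null (fun ω (hω : ζ ω ≠ 0) => ?_)
    (measure_iUnion_null fun m : ℕ => measure_iUnion_null fun n : ℕ =>
      hnull (1 / (m + 1)) n Nat.one_div_pos_of_nat)))
  obtain ⟨m, hm⟩ := exists_nat_one_div_lt (abs_pos.mpr hω)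
  obtain ⟨n, hn⟩ := exists_nat_ge |ζ ω|
  exact Set.mem_iUnion₂.mpr ⟨m, n, hm.le, hn⟩

lemma mul_card_filter_Icc_zero_integral_distZ_le [IsProbabilityMeasure μ] {Y : Ω → ℝ}
    (hY : Measurable Y) {A : Set Ω} (hA : MeasurableSet A) {a b q η : ℝ} (ha : 0 < a)
    (hq : 0 < q) (hη : 0 < η) (hAq : q ≤ μ.real A) (hYA : ∀ ω ∈ A, |Y ω| ∈ Set.Icc a b)
    {D : ℤ} (hD : 0 ≤ D) :
    q / 2 * #{d ∈ Icc 0 D | ∫ ω, distZ (Y ω * ((d : ℤ) : ℝ)) ∂μ ≤ η} ≤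
      (b * D + 2) * (4 * η / (q * a) + 1) := by
  classical
  obtain ⟨ω₀, hω₀⟩ := nonempty_of_measureReal_ne_zero (hq.trans_le hAq).ne'
  have hb : 0 ≤ b := ha.le.trans ((hYA ω₀ hω₀).1.trans (hYA ω₀ hω₀).2)
  have hD' : (0 : ℝ) ≤ D := by exact_mod_cast hD
  -- Markov at level `δ` leaves mass `q / 2` of `A` on which `Y * d` is `δ`-close to `ℤ`
  set δ := 2 * η / q
  have hδ : 0 < δ := by positivity
  refine mul_card_le_of_card_filter_mem_le (μ := μ) _
    (E := fun d : ℤ => A ∩ {ω | distZ (Y ω * d) ≤ δ})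
    (fun d => hA.inter (measurableSet_le (continuous_distZ.measurable.comp (hY.mul_const _))
      measurable_const)) (fun d hd => ?_) (fun ω => ?_)
  · have := measureReal_sub_div_le_measureReal_inter (fun ω => distZ_nonneg _)
      (integrable_distZ_comp (μ := μ) (hY.mul_const d)) hδ A
    have : (∫ ω, distZ (Y ω * d) ∂μ) / δ ≤ q / 2 := by
      rw [div_le_iff₀ hδ, show q / 2 * δ = η by simp only [δ]; field_simp]
      exact (mem_filter.mp hd).2
    linarith
  by_cases hωA : ω ∈ A
  · obtain ⟨haY, hYb⟩ := hYA ω hωA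
    have hY0 : 0 < |Y ω| := ha.trans_le haY
    calc _ ≤ ((#{d ∈ Icc 0 D | distZ (|Y ω| * ((d : ℤ) : ℝ)) ≤ δ} : ℕ) : ℝ) := by
          refine Nat.cast_le.mpr (card_le_card fun d hd => ?_)
          obtain ⟨hd, -, hdδ⟩ := mem_filter.mp hd
          have hd0 : (0 : ℝ) ≤ d := by exact_mod_cast (mem_Icc.mp (mem_filter.mp hd).1).1
          refine mem_filter.mpr ⟨(mem_filter.mp hd).1, ?_⟩
          rwa [← abs_of_nonneg hd0, ← abs_mul, distZ_abs]
      _ ≤ (|Y ω| * D + 2) * (2 * δ / |Y ω| + 1) := card_filter_distZ_mul_le hY0 hδ.le hD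
      _ ≤ (b * D + 2) * (4 * η / (q * a) + 1) := by
          rw [show 4 * η / (q * a) = 2 * δ / a by simp only [δ]; field_simp; ring]
          gcongr
  · rw [filter_false_of_mem fun d _ hd => hωA hd.1, card_empty, Nat.cast_zero]
    positivity

lemma mul_card_filter_Icc_integral_distZ_le [IsProbabilityMeasure μ] {Y : Ω → ℝ}
    (hY : Measurable Y) {A : Set Ω} (hA : MeasurableSet A) {a b q ε : ℝ} (ha : 0 < a)
    (hq : 0 < q) (hε : 0 < ε) (hAq : q ≤ μ.real A) (hYA : ∀ ω ∈ A, |Y ω| ∈ Set.Icc a b)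
    {lo hi : ℤ} (hlohi : lo ≤ hi) :
    q / 2 * #{z ∈ Icc lo hi | ∫ ω, distZ (Y ω * ((z : ℤ) : ℝ)) ∂μ ≤ ε} ≤
      (b * (hi - lo) + 2) * (8 * ε / (q * a) + 1) := by
  have htranslate := card_filter_le_card_filter_sub (F := fun z : ℤ => ∫ ω, distZ (Y ω * z) ∂μ)
    (fun m n => by simpa only [Int.cast_sub] using integral_distZ_mul_sub_le hY m n)
    lo hi ε
  calc _ ≤ q / 2 * #{d ∈ Icc 0 (hi - lo) | ∫ ω, distZ (Y ω * ((d : ℤ) : ℝ)) ∂μ ≤ 2 * ε} :=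
        mul_le_mul_of_nonneg_left (by exact_mod_cast htranslate) (by positivity)
    _ ≤ (b * ((hi - lo : ℤ) : ℝ) + 2) * (4 * (2 * ε) / (q * a) + 1) :=
        mul_card_filter_Icc_zero_integral_distZ_le hY hA ha hq (by positivity) hAq hYA
          (sub_nonneg.mpr hlohi)
    _ = _ := by push_cast; ring

lemma card_filter_div_card_Icc_le [IsProbabilityMeasure μ] {Y : Ω → ℝ} (hY : Measurable Y)
    {A : Set Ω} (hA : MeasurableSet A) {a b q ε : ℝ} (ha : 0 < a) (hq : 0 < q) (hε : 0 < ε)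
    (hAq : q ≤ μ.real A) (hYA : ∀ ω ∈ A, |Y ω| ∈ Set.Icc a b) {u v : ℝ} (huv : u < v) :
    (#{z ∈ Icc ⌈u⌉ ⌊v⌋ | ∫ ω, distZ (Y ω * ((z : ℤ) : ℝ)) ∂μ ≤ ε} : ℝ) / #(Icc ⌈u⌉ ⌊v⌋) ≤
      4 / q * ((b * (v - u) + 2) * (8 * ε / (q * a) + 1)) / (v - u) := by
  obtain ⟨ω₀, hω₀⟩ := nonempty_of_measureReal_ne_zero (hq.trans_le hAq).ne'
  have hb : 0 ≤ b := ha.le.trans ((hYA ω₀ hω₀).1.trans (hYA ω₀ hω₀).2)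
  have hvu : 0 < v - u := sub_pos.mpr huv
  rcases eq_empty_or_nonempty {z ∈ Icc ⌈u⌉ ⌊v⌋ | ∫ ω, distZ (Y ω * ((z : ℤ) : ℝ)) ∂μ ≤ ε}
    with hempty | ⟨z₀, hz₀⟩
  · rw [hempty, card_empty, Nat.cast_zero, zero_div]
    positivity
  have hz₀T := (mem_filter.mp hz₀).1
  have hT : (v - u) / 2 ≤ #(Icc ⌈u⌉ ⌊v⌋) := by
    have : (1 : ℝ) ≤ #(Icc ⌈u⌉ ⌊v⌋) := by exact_mod_cast card_pos.mpr ⟨z₀, hz₀T⟩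
    linarith [sub_sub_one_le_card_Icc_ceil_floor u v]
  have hcount := mul_card_filter_Icc_integral_distZ_le hY hA ha hq hε hAq hYA
    ((mem_Icc.mp hz₀T).1.trans (mem_Icc.mp hz₀T).2)
  have hlength : ((⌊v⌋ : ℝ) - ⌈u⌉) ≤ v - u := by linarith [Int.floor_le v, Int.le_ceil u]
  have hcard : (#{z ∈ Icc ⌈u⌉ ⌊v⌋ | ∫ ω, distZ (Y ω * ((z : ℤ) : ℝ)) ∂μ ≤ ε} : ℝ) ≤
      2 / q * ((b * (v - u) + 2) * (8 * ε / (q * a) + 1)) := by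
    rw [div_mul_eq_mul_div, le_div_iff₀' hq]
    linarith [hcount.trans (by gcongr : _ ≤ (b * (v - u) + 2) * (8 * ε / (q * a) + 1))]
  calc _ ≤ 2 / q * ((b * (v - u) + 2) * (8 * ε / (q * a) + 1)) / ((v - u) / 2) := by
        gcongr
    _ = 4 / q * ((b * (v - u) + 2) * (8 * ε / (q * a) + 1)) / (v - u) := by
        field_simp
        ring

end

lemma uniformOn_lattice_inter_Icc {k : ℕ} (hk : 0 < k) (h₁ h₂ : ℝ) (t : Set ℝ)
    [DecidablePred (· ∈ t)] :
    uniformOn ({x : ℝ | ∃ z : ℤ, x = z / k} ∩ Set.Icc h₁ h₂) t =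
      #{z ∈ Icc ⌈k * h₁⌉ ⌊k * h₂⌋ | ((z : ℤ) : ℝ) / k ∈ t} / #(Icc ⌈k * h₁⌉ ⌊k * h₂⌋) := by
  have hk' : (0 : ℝ) < k := by exact_mod_cast hk
  set g : ℤ → ℝ := fun z => z / k
  have hg : Function.Injective g := fun a b h => by simpa [g, hk'.ne'] using h
  set T := Icc ⌈k * h₁⌉ ⌊k * h₂⌋
  have hS : {x : ℝ | ∃ z : ℤ, x = z / k} ∩ Set.Icc h₁ h₂ = ↑(T.image g) := by
    ext x
    simp only [Set.mem_inter_iff, Set.mem_ofPred_eq, Set.mem_Icc, coe_image, Set.mem_image,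
      mem_coe, mem_Icc, T, g, Int.ceil_le, Int.le_floor]
    constructor
    · rintro ⟨⟨z, rfl⟩, h1, h2⟩
      rw [le_div_iff₀ hk'] at h1
      rw [div_le_iff₀ hk'] at h2
      exact ⟨z, ⟨by linarith, by linarith⟩, rfl⟩
    · rintro ⟨z, ⟨h1, h2⟩, rfl⟩
      exact ⟨⟨z, rfl⟩, (le_div_iff₀ hk').mpr (by linarith),
        (div_le_iff₀ hk').mpr (by linarith)⟩
  have hSt : ↑(T.image g) ∩ t = ↑({z ∈ T | g z ∈ t}.image g) := by
    ext x
    simp only [Set.mem_inter_iff, coe_image, coe_filter, Set.mem_image]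
    grind
  rw [hS, ← uniformOn_inter_self (T.image g).finite_toSet, hSt, uniformOn_apply_finset,
    inter_eq_right.mpr (image_subset_image (filter_subset _ _)), card_image_of_injective _ hg,
    card_image_of_injective _ hg]

lemma lattice_count_bound_le_mul_max {p c M ε s k h : ℝ} (hp : 0 < p) (hc : 0 < c)
    (hM : 0 < M) (hs : 0 < s) (hk : 0 < k) (hh : 0 < h) :
    4 / p * ((M * s / k * (k * h) + 2) * (8 * ε / (p * (c * s / k)) + 1)) / (k * h) ≤
      4 / p * (8 * M / (p * c) + M + 16 / (p * c) + 2) *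
        max (max (1 / (k * h)) (ε / (s * h))) (max ε (s / k)) := by
  set m := max (max (1 / (k * h)) (ε / (s * h))) (max ε (s / k))
  calc _ = 4 / p * (8 * M / (p * c) * ε + M * (s / k) + 16 / (p * c) * (ε / (s * h)) +
          2 * (1 / (k * h))) := by
        field_simp
        ring
    _ ≤ 4 / p * (8 * M / (p * c) * m + M * m + 16 / (p * c) * m + 2 * m) := by
        gcongr
        · exact (le_max_left _ _).trans (le_max_right _ _)
        · exact (le_max_right _ _).trans (le_max_right _ _)
        · exact (le_max_right _ _).trans (le_max_left _ _)
        · exact (le_max_left _ _).trans (le_max_left _ _)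
    _ = 4 / p * (8 * M / (p * c) + M + 16 / (p * c) + 2) * m := by ring

theorem dist_from_integers_bound_general
    (Ω : Type) [MeasurableSpace Ω] (μ : Measure Ω) [IsProbabilityMeasure μ]
    (ζ : Ω → ℝ) (hζm : Measurable ζ)
    (h2 : 0 < ∫ ω, (ζ ω) ^ 2 ∂μ) :
    ∃ C : ℝ, 0 < C ∧
      ∀ (ε s : ℝ) (k : ℕ) (h₁ h₂ : ℝ),
        ε ∈ Set.Ioo (0:ℝ) 1 → 0 < s → 0 < k → h₁ < h₂ →
        (uniformOn ({x : ℝ | ∃ z : ℤ, x = z / k} ∩ Set.Icc h₁ h₂)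
            {x : ℝ | (∫ ω, distZ (ζ ω * s * x) ∂μ) ≤ ε}).toReal
          ≤ C * max (max (1 / (k * (h₂ - h₁))) (ε / (s * (h₂ - h₁)))) (max ε (s / k)) := by
  classical
  have hζ : ¬ζ =ᵐ[μ] 0 := fun h =>
    h2.ne' (integral_eq_zero_of_ae (h.mono fun ω hω => by simp [hω]))
  obtain ⟨c, M, hc, hcM, hA⟩ := exists_measure_abs_mem_Icc_ne_zero hζ
  set p := μ.real {ω | |ζ ω| ∈ Set.Icc c M}
  have hp : 0 < p := ENNReal.toReal_pos hA (measure_ne_top _ _)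
  have hM : 0 < M := hc.trans_le hcM
  refine ⟨4 / p * (8 * M / (p * c) + M + 16 / (p * c) + 2), by positivity, ?_⟩
  rintro ε s k h₁ h₂ ⟨hε, -⟩ hs hk hh
  have hk' : (0 : ℝ) < k := by exact_mod_cast hk
  set Y : Ω → ℝ := fun ω => ζ ω * s / k
  have hB : {z ∈ Icc ⌈k * h₁⌉ ⌊k * h₂⌋ |
        ((z : ℤ) : ℝ) / k ∈ {x : ℝ | (∫ ω, distZ (ζ ω * s * x) ∂μ) ≤ ε}} =
      {z ∈ Icc ⌈k * h₁⌉ ⌊k * h₂⌋ | ∫ ω, distZ (Y ω * ((z : ℤ) : ℝ)) ∂μ ≤ ε} :=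
    filter_congr fun z _ => by
      simp only [Set.mem_ofPred_eq, Y, mul_div_assoc', mul_div_right_comm]
  rw [uniformOn_lattice_inter_Icc hk, hB, ENNReal.toReal_div, ENNReal.toReal_natCast,
    ENNReal.toReal_natCast]
  have hratio := card_filter_div_card_Icc_le ((hζm.mul_const s).div_const k)
    (hζm.abs measurableSet_Icc) (a := c * s / k) (b := M * s / k) (by positivity) hp hε le_rfl
    (fun ω hω => by
      simp only [abs_div, abs_mul, abs_of_pos hs, Nat.abs_cast]
      exact ⟨by gcongr; exact hω.1, by gcongr; exact hω.2⟩)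
    (mul_lt_mul_of_pos_left hh hk')
  rw [← mul_sub] at hratio
  exact hratio.trans (lattice_count_bound_le_mul_max hp hc hM hs hk' (sub_pos.mpr hh))

/-- anti-concentration of the expected distance to the integers, for a
uniform point of a lattice interval and a random variable with finite fourth moment. -/
theorem dist_from_integers_bound
    (Ω : Type) [MeasurableSpace Ω] (μ : Measure Ω) [IsProbabilityMeasure μ]
    (ζ : Ω → ℝ) (hζm : Measurable ζ)
    (h4 : Integrable (fun ω => (ζ ω) ^ 4) μ)
    (h2 : 0 < ∫ ω, (ζ ω) ^ 2 ∂μ) :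
    ∃ C : ℝ, 0 < C ∧
      ∀ (ε s : ℝ) (k : ℕ) (h₁ h₂ : ℝ),
        ε ∈ Set.Ioo (0:ℝ) 1 → 0 < s → 0 < k → h₁ < h₂ →
        (uniformOn ({x : ℝ | ∃ z : ℤ, x = z / k} ∩ Set.Icc h₁ h₂)
            {x : ℝ | (∫ ω, distZ (ζ ω * s * x) ∂μ) ≤ ε}).toReal
          ≤ C * max (max (1 / (k * (h₂ - h₁))) (ε / (s * (h₂ - h₁)))) (max ε (s / k)) :=
  dist_from_integers_bound_general Ω μ ζ hζm h2
end

section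
/- Let r, δ, ρ ∈ (0,1), let g be a growth function, let n ≥ 30/r, and let M_n be an n × n random matrix whose entries are i.i.d. copies of η. Set b_n := Σ_{i=1}^n g(i). Then for every ε > 0: P( ∃ x ∈ V_n(r, g, δ, ρ) with ‖M_n x‖₂ ≤ ε·‖x‖₂ ) ≤ (8/(rn)⁴) · Σ P( dist(C_{i_j}(M_n), H_{i_j}(M_n)) ≤ ε·b_n for all j ∈ {1,2,3,4} ), where the sum is over all 4-tuples (i₁, i₂, i₃, i₄) of pairwise distinct indices in [n]. -/
open MeasureTheory ProbabilityTheory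

/-- Euclidean norm of a vector. -/
noncomputable def l2norm {n : ℕ} (v : Fin n → ℝ) : ℝ := Real.sqrt (∑ i, v i ^ 2)

/-- A growth function: a nondecreasing function from `[1, ∞)` to `[1, ∞)`. -/
def IsGrowth (g : ℝ → ℝ) : Prop :=
  (∀ t, 1 ≤ t → 1 ≤ g t) ∧ MonotoneOn g (Set.Ici 1)

/-- Condition (G) with parameter `K₃`: `g(at) ≥ g(t) + a` for `a ≥ 2`, `t ≥ 1`, and
`∏_{j=1}^∞ g(2^j)^{j·2^{-j}} ≤ K₃` (expressed via all partial products). -/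
def CondG (g : ℝ → ℝ) (K₃ : ℝ) : Prop :=
  (∀ a t : ℝ, 2 ≤ a → 1 ≤ t → g t + a ≤ g (a * t)) ∧
    ∀ N : ℕ, (∏ j ∈ Finset.Icc 1 N, g ((2 : ℝ) ^ j) ^ ((j : ℝ) / 2 ^ j)) ≤ K₃

/-- The lattice set `Λ_n(k, g, Q₁, Q₂, ρ, σ, h)`. -/
def Lambda (n k : ℕ) (g : ℝ → ℝ) (Q₁ Q₂ : Finset (Fin n)) (ρ : ℝ)
    (σ : Equiv.Perm (Fin n)) (h : ℝ) : Set (Fin n → ℝ) :=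
  {x | (∀ i, ∃ z : ℤ, x i = z / k) ∧
    (∀ i : Fin n, |x (σ i)| ≤ g ((n : ℝ) / ((i : ℕ) + 1))) ∧
    (∀ i ∈ Q₁, h ≤ x i) ∧ (∀ i ∈ Q₂, x i ≤ h - ρ)}

/-- The nonincreasing rearrangement of the absolute values of the coordinates. -/
noncomputable def decRe {n : ℕ} (x : Fin n → ℝ) : Fin n → ℝ :=
  fun i => |x (Tuple.sort (fun j => -|x j|) i)|

/-- The `i`-th largest absolute value of a coordinate (1-based index `i`). -/
noncomputable def kthAbs {n : ℕ} (x : Fin n → ℝ) (i : ℕ) : ℝ :=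
  if h : 1 ≤ i ∧ i ≤ n then decRe x ⟨i - 1, by omega⟩ else 0

/-- The set of gradual nonconstant (unstructured) vectors `V_n(r, g, δ, ρ)`. -/
def Vn (n : ℕ) (r : ℝ) (g : ℝ → ℝ) (δ ρ : ℝ) : Set (Fin n → ℝ) :=
  {x | kthAbs x ⌊r * n⌋₊ = 1 ∧
    (∀ i : ℕ, 1 ≤ i → i ≤ n → kthAbs x i ≤ g ((n : ℝ) / i)) ∧
    ∃ Q₁ Q₂ : Finset (Fin n), δ * n ≤ Q₁.card ∧ δ * n ≤ Q₂.card ∧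
      ∀ i ∈ Q₁, ∀ j ∈ Q₂, x j ≤ x i - ρ}

/-- Euclidean distance from the `i`-th column of `A` to the span of the other columns. -/
noncomputable def distToSpan {n : ℕ} (A : Matrix (Fin n) (Fin n) ℝ) (i : Fin n) : ℝ :=
  sInf {d : ℝ | ∃ c : Fin n → ℝ,
    d = l2norm (fun r => A r i - ∑ j ∈ Finset.univ.erase i, c j * A r j)}

/-!
If `‖M x‖ ≤ ε ‖x‖` for some `x ∈ V_n(r, g, δ, ρ)`, look at the `m = ⌊rn⌋` coordinates with
`|x_j| ≥ 1`. Writing `M x = x_j C_j + ∑_{k ≠ j} x_k C_k` gives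
`dist(C_j, H_j) ≤ ‖M x‖ / |x_j| ≤ ε ‖x‖ ≤ ε b_n`, the last step because a gradual vector has
`‖x‖₂ ≤ ‖x‖₁ = ∑ x*_i ≤ ∑ g(n / i) ≤ ∑ g(n + 1 - i) = b_n`. Hence at least
`(m - 3)^4 ≥ (rn)^4 / 8` ordered quadruples of distinct indices have all four distances at most
`ε b_n`, and Markov's inequality for the number of such quadruples gives the bound.
-/

open Finset

section L2norm

variable {n : ℕ}

lemma l2norm_eq_norm_toLp (v : Fin n → ℝ) : l2norm v = ‖WithLp.toLp 2 v‖ := by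
  simp only [l2norm, EuclideanSpace.norm_eq, Real.norm_eq_abs, sq_abs]

lemma l2norm_nonneg (v : Fin n → ℝ) : 0 ≤ l2norm v := Real.sqrt_nonneg _

lemma l2norm_smul (c : ℝ) (v : Fin n → ℝ) : l2norm (c • v) = |c| * l2norm v := by
  rw [l2norm_eq_norm_toLp, l2norm_eq_norm_toLp, WithLp.toLp_smul, norm_smul, Real.norm_eq_abs]

lemma l2norm_le_sum_abs (v : Fin n → ℝ) : l2norm v ≤ ∑ i, |v i| := by
  refine (Real.sqrt_le_left (sum_nonneg fun i _ => abs_nonneg (v i))).2 ?_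
  simpa only [sq_abs] using sum_sq_le_sq_sum_of_nonneg fun i _ => abs_nonneg (v i)

end L2norm

section Rearrangement

variable {n : ℕ} (x : Fin n → ℝ)

lemma mem_Icc_of_kthAbs_ne_zero {i : ℕ} (hi : kthAbs x i ≠ 0) : i ∈ Icc 1 n := by
  by_contra h
  rw [mem_Icc] at h
  exact hi (dif_neg h)

lemma kthAbs_succ (i : Fin n) : kthAbs x (i + 1) = decRe x i :=
  dif_pos ⟨by omega, i.isLt⟩

lemma decRe_antitone : Antitone (decRe x) := fun _ _ hij => by
  simpa [decRe] using Tuple.monotone_sort (fun j => -|x j|) hij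

lemma sum_kthAbs : ∑ i ∈ Icc 1 n, kthAbs x i = ∑ j, |x j| := by
  rw [← Equiv.sum_comp (Tuple.sort fun j => -|x j|), ← Ico_add_one_right_eq_Icc,
    sum_Ico_eq_sum_range, add_tsub_cancel_right, ← Fin.sum_univ_eq_sum_range]
  exact sum_congr rfl fun i _ => by rw [add_comm, kthAbs_succ]; rfl

lemma exists_card_eq_kthAbs_le_abs {i : ℕ} (hi : i ∈ Icc 1 n) :
    ∃ S : Finset (Fin n), #S = i ∧ ∀ j ∈ S, kthAbs x i ≤ |x j| := by
  obtain ⟨hi1, hin⟩ := mem_Icc.1 hi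
  refine ⟨univ.map ((Fin.castLEEmb hin).trans (Tuple.sort fun j => -|x j|).toEmbedding),
    by simp, ?_⟩
  simp only [mem_map, mem_univ, true_and, forall_exists_index]
  rintro _ k rfl
  obtain ⟨i, rfl⟩ : ∃ i', i = i' + 1 := ⟨i - 1, by omega⟩
  calc kthAbs x (i + 1) = decRe x ⟨i, by omega⟩ := kthAbs_succ x ⟨i, by omega⟩
    _ ≤ decRe x (Fin.castLE hin k) := decRe_antitone x (Fin.le_def.2 (Nat.lt_succ_iff.1 k.isLt))
    _ = _ := rfl

lemma l2norm_le_sum_of_gradual {g : ℝ → ℝ} (hg : MonotoneOn g (Set.Ici 1))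
    (hx : ∀ i : ℕ, 1 ≤ i → i ≤ n → kthAbs x i ≤ g ((n : ℝ) / i)) :
    l2norm x ≤ ∑ k ∈ Icc 1 n, g k := by
  have hreflect : ∑ i ∈ Icc 1 n, g ((n + 1 - i : ℕ) : ℝ) = ∑ k ∈ Icc 1 n, g k := by
    refine sum_nbij' (fun i => n + 1 - i) (fun i => n + 1 - i) ?_ ?_ ?_ ?_ fun _ _ => rfl <;>
      simp only [mem_Icc] <;> omega
  calc l2norm x ≤ ∑ j, |x j| := l2norm_le_sum_abs x
    _ = ∑ i ∈ Icc 1 n, kthAbs x i := (sum_kthAbs x).symm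
    _ ≤ ∑ i ∈ Icc 1 n, g ((n + 1 - i : ℕ) : ℝ) := sum_le_sum fun i hi => by
        obtain ⟨hi1, hin⟩ := mem_Icc.1 hi
        have hi1' : (1 : ℝ) ≤ i := by exact_mod_cast hi1
        have hin' : (i : ℝ) ≤ n := by exact_mod_cast hin
        refine (hx i hi1 hin).trans (hg ?_ ?_ ?_)
        · exact (one_le_div₀ (by positivity)).2 hin'
        · simp only [Set.mem_Ici, Nat.cast_sub (by omega : i ≤ n + 1)]; push_cast; linarith
        · rw [Nat.cast_sub (by omega), div_le_iff₀ (by positivity)]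
          push_cast
          nlinarith
    _ = ∑ k ∈ Icc 1 n, g k := hreflect

end Rearrangement

section DistToSpan

variable {n : ℕ} (A : Matrix (Fin n) (Fin n) ℝ)

lemma distToSpan_nonneg (i : Fin n) : 0 ≤ distToSpan A i :=
  Real.sInf_nonneg <| by rintro d ⟨c, rfl⟩; exact l2norm_nonneg _

lemma distToSpan_le (i : Fin n) (c : Fin n → ℝ) :
    distToSpan A i ≤ l2norm (fun r => A r i - ∑ j ∈ univ.erase i, c j * A r j) :=
  csInf_le ⟨0, by rintro d ⟨c', rfl⟩; exact l2norm_nonneg _⟩ ⟨c, rfl⟩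

lemma distToSpan_mul_abs_le (x : Fin n → ℝ) (j : Fin n) :
    distToSpan A j * |x j| ≤ l2norm (A.mulVec x) := by
  rcases eq_or_ne (x j) 0 with hxj | hxj
  · rw [hxj, abs_zero, mul_zero]
    exact l2norm_nonneg _
  have hcol : (fun r => A r j - ∑ k ∈ univ.erase j, -(x k / x j) * A r k) =
      (x j)⁻¹ • A.mulVec x := by
    funext r
    rw [Pi.smul_apply, Matrix.mulVec, dotProduct, ← add_sum_erase _ _ (mem_univ j),
      smul_eq_mul, mul_add, mul_sum, sub_eq_add_neg, ← sum_neg_distrib]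
    congr 1
    · field_simp
    · exact sum_congr rfl fun k _ => by ring
  calc distToSpan A j * |x j| ≤ l2norm ((x j)⁻¹ • A.mulVec x) * |x j| := by
        gcongr
        exact hcol ▸ distToSpan_le A j _
    _ = l2norm (A.mulVec x) := by
        rw [l2norm_smul, abs_inv, mul_comm, ← mul_assoc, mul_inv_cancel₀ (abs_ne_zero.2 hxj),
          one_mul]

end DistToSpan

lemma card_sub_three_pow_le_card {α : Type*} (S : Finset α) (T : Finset (α × α × α × α))
    (hT : ∀ a ∈ S, ∀ b ∈ S, ∀ c ∈ S, ∀ d ∈ S,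
      a ≠ b → a ≠ c → a ≠ d → b ≠ c → b ≠ d → c ≠ d → (a, b, c, d) ∈ T) :
    (#S - 3) ^ 4 ≤ #T := by
  classical
  let quad : (Fin 4 ↪ S) → α × α × α × α := fun f => (f 0, f 1, f 2, f 3)
  have hmaps : Set.MapsTo quad (univ : Finset (Fin 4 ↪ S)) T := fun f _ =>
    hT _ (f 0).2 _ (f 1).2 _ (f 2).2 _ (f 3).2 (by simp) (by simp) (by simp) (by simp) (by simp)
      (by simp)
  have hinj : Set.InjOn quad (univ : Finset (Fin 4 ↪ S)) := by
    intro f _ f' _ h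
    simp only [quad, Prod.mk.injEq] at h
    ext i
    fin_cases i <;> simp [h]
  calc (#S - 3) ^ 4 = (#S + 1 - 4) ^ 4 := by rw [Nat.add_sub_add_right]
    _ ≤ (#S).descFactorial 4 := Nat.pow_sub_le_descFactorial _ _
    _ = #(univ : Finset (Fin 4 ↪ S)) := by simp [Fintype.card_embedding_eq]
    _ ≤ #T := card_le_card_of_injOn quad hmaps hinj

/-- Markov's inequality, applied to the number of measurable hulls `toMeasurable μ (A q)`
containing `ω`. -/
lemma natCast_mul_measure_le_sum_measure {Ω ι : Type*} [MeasurableSpace Ω] (μ : Measure Ω)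
    (A : ι → Set Ω) (Q : Finset ι) (N : ℕ) (E : Set Ω)
    (hE : ∀ ω ∈ E, ∃ T ⊆ Q, N ≤ #T ∧ ∀ q ∈ T, ω ∈ A q) :
    N * μ E ≤ ∑ q ∈ Q, μ (A q) := by
  classical
  let B q := toMeasurable μ (A q)
  let count : Ω → ENNReal := fun ω => ∑ q ∈ Q, (B q).indicator 1 ω
  have hcount : ∀ ω ∈ E, (N : ENNReal) ≤ count ω := by
    intro ω hω
    obtain ⟨T, hTQ, hNT, hTA⟩ := hE ω hω
    calc (N : ENNReal) ≤ ∑ _q ∈ T, 1 := by simpa using hNT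
      _ = ∑ q ∈ T, (B q).indicator 1 ω := sum_congr rfl fun q hq =>
          (Set.indicator_of_mem (subset_toMeasurable μ _ (hTA q hq)) (1 : Ω → ENNReal)).symm
      _ ≤ count ω := sum_le_sum_of_subset hTQ
  calc N * μ E ≤ N * μ {ω | N ≤ count ω} := by gcongr; exact hcount
    _ ≤ ∫⁻ ω, count ω ∂μ :=
        mul_meas_ge_le_lintegral (Finset.measurable_sum _ fun q _ =>
          measurable_one.indicator (measurableSet_toMeasurable μ _)) _
    _ = ∑ q ∈ Q, μ (A q) := by
        rw [lintegral_finsetSum _ fun q _ =>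
          measurable_one.indicator (measurableSet_toMeasurable μ _)]
        exact sum_congr rfl fun q _ => by
          rw [lintegral_indicator_one (measurableSet_toMeasurable μ _), measure_toMeasurable]

lemma toReal_measure_le_sum_toReal_div {Ω ι : Type*} [MeasurableSpace Ω] (μ : Measure Ω)
    [IsFiniteMeasure μ] (A : ι → Set Ω) (Q : Finset ι) {N : ℕ} (hN : 0 < N) (E : Set Ω)
    (hE : ∀ ω ∈ E, ∃ T ⊆ Q, N ≤ #T ∧ ∀ q ∈ T, ω ∈ A q) :
    (μ E).toReal ≤ (∑ q ∈ Q, (μ (A q)).toReal) / N := by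
  rw [le_div_iff₀ (by exact_mod_cast hN), mul_comm, ← ENNReal.toReal_natCast,
    ← ENNReal.toReal_mul, ← ENNReal.toReal_sum fun q _ => measure_ne_top μ _]
  exact ENNReal.toReal_mono (ENNReal.sum_ne_top.2 fun q _ => measure_ne_top μ _)
    (natCast_mul_measure_le_sum_measure μ A Q N E hE)

lemma pow_div_eight_le_floor_sub_three_pow {x : ℝ} (hx : 30 ≤ x) :
    x ^ 4 / 8 ≤ ((⌊x⌋₊ - 3 : ℕ) : ℝ) ^ 4 := by
  have hfloor : x - 1 ≤ ⌊x⌋₊ := by linarith [Nat.lt_floor_add_one x]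
  have h3 : 3 ≤ ⌊x⌋₊ := Nat.le_floor (by norm_num; linarith)
  calc x ^ 4 / 8 ≤ (13 / 15 * x) ^ 4 := by
        rw [mul_pow]
        nlinarith [pow_nonneg (by linarith : 0 ≤ x) 4]
    _ ≤ ((⌊x⌋₊ - 3 : ℕ) : ℝ) ^ 4 :=
        pow_le_pow_left₀ (by positivity) (by rw [Nat.cast_sub h3]; push_cast; linarith) 4

section Vn

variable {n : ℕ} {r δ ρ : ℝ} {g : ℝ → ℝ} {x : Fin n → ℝ}

lemma floor_mem_Icc_of_mem_Vn (hx : x ∈ Vn n r g δ ρ) : ⌊r * n⌋₊ ∈ Icc 1 n :=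
  mem_Icc_of_kthAbs_ne_zero x (hx.1 ▸ one_ne_zero)

lemma pos_of_mem_Vn (hx : x ∈ Vn n r g δ ρ) : 0 < r := by
  have h : 1 ≤ r * n := Nat.floor_pos.1 (mem_Icc.1 (floor_mem_Icc_of_mem_Vn hx)).1
  by_contra! hr
  nlinarith [n.cast_nonneg (α := ℝ)]

lemma floor_le_card_distToSpan_le (hg : MonotoneOn g (Set.Ici 1)) (A : Matrix (Fin n) (Fin n) ℝ)
    (hx : x ∈ Vn n r g δ ρ) {ε : ℝ} (hε : 0 ≤ ε) (hAx : l2norm (A.mulVec x) ≤ ε * l2norm x) :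
    ⌊r * n⌋₊ ≤ #{i | distToSpan A i ≤ ε * ∑ k ∈ Icc 1 n, g k} := by
  obtain ⟨S, hS, hSx⟩ := exists_card_eq_kthAbs_le_abs x (floor_mem_Icc_of_mem_Vn hx)
  rw [← hS]
  refine card_le_card fun j hj => mem_filter.2 ⟨mem_univ j, ?_⟩
  calc distToSpan A j ≤ distToSpan A j * |x j| :=
        le_mul_of_one_le_right (distToSpan_nonneg A j) (hx.1 ▸ hSx j hj)
    _ ≤ l2norm (A.mulVec x) := distToSpan_mul_abs_le A x j
    _ ≤ ε * l2norm x := hAx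
    _ ≤ ε * ∑ k ∈ Icc 1 n, g k := by gcongr; exact l2norm_le_sum_of_gradual x hg hx.2.1

end Vn

theorem invertibility_via_distance_general
    (r δ ρ : ℝ)
    (g : ℝ → ℝ) (hg : IsGrowth g)
    (n : ℕ) (hn : 30 / r ≤ (n : ℝ))
    (Ω : Type) [MeasurableSpace Ω] (μ : Measure Ω) [IsProbabilityMeasure μ]
    (M : Ω → Matrix (Fin n) (Fin n) ℝ) :
    ∀ ε : ℝ, 0 < ε →
      (μ {ω | ∃ x ∈ Vn n r g δ ρ,
          l2norm ((M ω).mulVec x) ≤ ε * l2norm x}).toReal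
        ≤ 8 / (r * n) ^ 4 *
          ∑ q ∈ (Finset.univ : Finset (Fin n × Fin n × Fin n × Fin n)).filter
              (fun q => q.1 ≠ q.2.1 ∧ q.1 ≠ q.2.2.1 ∧ q.1 ≠ q.2.2.2 ∧
                q.2.1 ≠ q.2.2.1 ∧ q.2.1 ≠ q.2.2.2 ∧ q.2.2.1 ≠ q.2.2.2),
            (μ {ω | distToSpan (M ω) q.1 ≤ ε * ∑ i ∈ Finset.Icc 1 n, g i ∧
                distToSpan (M ω) q.2.1 ≤ ε * ∑ i ∈ Finset.Icc 1 n, g i ∧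
                distToSpan (M ω) q.2.2.1 ≤ ε * ∑ i ∈ Finset.Icc 1 n, g i ∧
                distToSpan (M ω) q.2.2.2 ≤ ε * ∑ i ∈ Finset.Icc 1 n, g i}).toReal := by
  intro ε hε
  set E := {ω | ∃ x ∈ Vn n r g δ ρ, l2norm ((M ω).mulVec x) ≤ ε * l2norm x}
  set Q := (univ : Finset (Fin n × Fin n × Fin n × Fin n)).filter
    (fun q => q.1 ≠ q.2.1 ∧ q.1 ≠ q.2.2.1 ∧ q.1 ≠ q.2.2.2 ∧
      q.2.1 ≠ q.2.2.1 ∧ q.2.1 ≠ q.2.2.2 ∧ q.2.2.1 ≠ q.2.2.2)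
  set β := ε * ∑ i ∈ Icc 1 n, g i
  set A : Fin n × Fin n × Fin n × Fin n → Set Ω := fun q => {ω | distToSpan (M ω) q.1 ≤ β ∧
    distToSpan (M ω) q.2.1 ≤ β ∧ distToSpan (M ω) q.2.2.1 ≤ β ∧ distToSpan (M ω) q.2.2.2 ≤ β}
  rcases E.eq_empty_or_nonempty with hE | ⟨-, x, hx, -⟩
  · rw [hE, measure_empty, ENNReal.toReal_zero]
    exact mul_nonneg (by positivity) (sum_nonneg fun _ _ => ENNReal.toReal_nonneg)
  have hrn : 30 ≤ r * n := by
    rwa [div_le_iff₀ (pos_of_mem_Vn hx), mul_comm] at hn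
  set N := (⌊r * n⌋₊ - 3) ^ 4
  have hcover : ∀ ω ∈ E, ∃ T ⊆ Q, N ≤ #T ∧ ∀ q ∈ T, ω ∈ A q := by
    classical
    rintro ω ⟨y, hy, hMy⟩
    refine ⟨{q ∈ Q | ω ∈ A q}, filter_subset _ _, ?_, fun q hq => (mem_filter.1 hq).2⟩
    refine (Nat.pow_le_pow_left (Nat.sub_le_sub_right
      (floor_le_card_distToSpan_le hg.2 (M ω) hy hε.le hMy) 3) 4).trans
      (card_sub_three_pow_le_card _ _ ?_)
    intro a ha b hb c hc d hd hab hac had hbc hbd hcd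
    simp only [mem_filter, mem_univ, true_and] at ha hb hc hd
    exact mem_filter.2 ⟨mem_filter.2 ⟨mem_univ _, hab, hac, had, hbc, hbd, hcd⟩, ha, hb, hc, hd⟩
  have hN : (r * n) ^ 4 / 8 ≤ N := by
    simpa [N] using pow_div_eight_le_floor_sub_three_pow hrn
  have hN0 : 0 < N := Nat.cast_pos.1 (hN.trans_lt' (by positivity))
  calc (μ E).toReal ≤ (∑ q ∈ Q, (μ (A q)).toReal) / N :=
        toReal_measure_le_sum_toReal_div μ A Q hN0 E hcover
    _ ≤ (∑ q ∈ Q, (μ (A q)).toReal) / ((r * n) ^ 4 / 8) :=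
        div_le_div_of_nonneg_left (sum_nonneg fun _ _ => ENNReal.toReal_nonneg) (by positivity) hN
    _ = 8 / (r * n) ^ 4 * ∑ q ∈ Q, (μ (A q)).toReal := by ring

/-- invertibility via distance. -/
theorem invertibility_via_distance
    (L : ℕ) (a pv : Fin L → ℝ) (b : ℝ)
    (ha0 : ∀ i, a i ≠ 0) (ha1 : ∀ i, |a i| ≤ 1)
    (hpv : ∀ i, 0 < pv i) (hpsum : ∑ i, pv i = 1)
    (r δ ρ : ℝ) (hr : r ∈ Set.Ioo (0:ℝ) 1) (hδ : δ ∈ Set.Ioo (0:ℝ) 1)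
    (hρ : ρ ∈ Set.Ioo (0:ℝ) 1)
    (g : ℝ → ℝ) (hg : IsGrowth g)
    (n : ℕ) (hn : 30 / r ≤ (n : ℝ))
    (p : ℝ) (hp0 : 0 ≤ p) (hp1 : p ≤ 1)
    (Ω : Type) [MeasurableSpace Ω] (μ : Measure Ω) [IsProbabilityMeasure μ]
    (M : Ω → Matrix (Fin n) (Fin n) ℝ)
    (hMeas : ∀ i j, Measurable fun ω => M ω i j)
    (hInd : iIndepFun
      (fun ij : Fin n × Fin n => fun ω => M ω ij.1 ij.2) μ)
    (hLaw : ∀ i j, Measure.map (fun ω => M ω i j) μ = etaLaw L a pv p b) :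
    ∀ ε : ℝ, 0 < ε →
      (μ {ω | ∃ x ∈ Vn n r g δ ρ,
          l2norm ((M ω).mulVec x) ≤ ε * l2norm x}).toReal
        ≤ 8 / (r * n) ^ 4 *
          ∑ q ∈ (Finset.univ : Finset (Fin n × Fin n × Fin n × Fin n)).filter
              (fun q => q.1 ≠ q.2.1 ∧ q.1 ≠ q.2.2.1 ∧ q.1 ≠ q.2.2.2 ∧
                q.2.1 ≠ q.2.2.1 ∧ q.2.1 ≠ q.2.2.2 ∧ q.2.2.1 ≠ q.2.2.2),
            (μ {ω | distToSpan (M ω) q.1 ≤ ε * ∑ i ∈ Finset.Icc 1 n, g i ∧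
                distToSpan (M ω) q.2.1 ≤ ε * ∑ i ∈ Finset.Icc 1 n, g i ∧
                distToSpan (M ω) q.2.2.1 ≤ ε * ∑ i ∈ Finset.Icc 1 n, g i ∧
                distToSpan (M ω) q.2.2.2 ≤ ε * ∑ i ∈ Finset.Icc 1 n, g i}).toReal :=
  invertibility_via_distance_general r δ ρ g hg n hn Ω μ M
end
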